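/- arXiv:1806.03566 — 3 statements merged into one kernel-verified Lean document; each statement's English description precedes it below -/
import Mathlib

section
/- Let A be a Poisson superalgebra with an even Poisson bracket, and let h ∈ A be an odd element with {h,h} = 1. Then for every f ∈ A, the elements {h, h·f} and {h, f} lie in ker(ad_h), and f = {h, h·f} + h·{h, f}. Consequently the multiplication map C⟨1, h⟩ ⊗ ker(ad_h) → A, a ⊗ b ↦ ab, is surjective. -/
/-- The Koszul sign `(-1)^{pq}` for parities `p q : ZMod 2`, as a complex scalar. -/
noncomputable def ssgn (p q : ZMod 2) : ℂ := (-1 : ℂ) ^ (p.val * q.val)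

/-!
STATEMENT 2: In a Poisson superalgebra with an even Poisson bracket, if h is an
odd element with {h,h} = 1, then for every f the elements {h, h·f} and {h, f}
lie in ker(ad_h), and f = {h, h·f} + h·{h, f}.  Consequently every element of A
is of the form b + h·c with b, c ∈ ker(ad_h), i.e. the multiplication map
ℂ⟨1,h⟩ ⊗ ker(ad_h) → A is surjective.
-/

theorem stmt2
    {A : Type} [Ring A] [Algebra ℂ A]
    -- the ℤ/2-grading
    (𝒜 : ZMod 2 → Submodule ℂ A)
    (hone : (1 : A) ∈ 𝒜 0)
    (hmul : ∀ p q : ZMod 2, ∀ a b : A, a ∈ 𝒜 p → b ∈ 𝒜 q → a * b ∈ 𝒜 (p + q))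
    (hsup : 𝒜 0 ⊔ 𝒜 1 = ⊤)
    (hind : 𝒜 0 ⊓ 𝒜 1 = ⊥)
    -- supercommutativity
    (hscomm : ∀ p q : ZMod 2, ∀ a b : A, a ∈ 𝒜 p → b ∈ 𝒜 q →
      a * b = ssgn p q • (b * a))
    -- the even Poisson bracket and its axioms
    (P : A →ₗ[ℂ] A →ₗ[ℂ] A)
    (heven : ∀ p q : ZMod 2, ∀ a b : A, a ∈ 𝒜 p → b ∈ 𝒜 q → P a b ∈ 𝒜 (p + q))
    (hskew : ∀ p q : ZMod 2, ∀ a b : A, a ∈ 𝒜 p → b ∈ 𝒜 q →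
      P a b = -(ssgn p q) • P b a)
    (hjacobi : ∀ p q : ZMod 2, ∀ a b : A, a ∈ 𝒜 p → b ∈ 𝒜 q → ∀ c : A,
      P a (P b c) = P (P a b) c + ssgn p q • P b (P a c))
    (hleib : ∀ p q : ZMod 2, ∀ a b : A, a ∈ 𝒜 p → b ∈ 𝒜 q → ∀ c : A,
      P a (b * c) = P a b * c + ssgn p q • (b * P a c))
    (h : A) (hh : h ∈ 𝒜 1) (hhh : P h h = 1) :
    (∀ f : A,
        P h (P h (h * f)) = 0 ∧
        P h (P h f) = 0 ∧
        f = P h (h * f) + h * P h f) ∧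
    (∀ f : A, ∃ b c : A, P h b = 0 ∧ P h c = 0 ∧ f = b + h * c) := by

  -- P a 1 = 0 whenever a is homogeneous
  have hP1right : ∀ p : ZMod 2, ∀ a : A, a ∈ 𝒜 p → P a 1 = 0 := by
    intro p a ha
    have := hleib p 0 a 1 ha hone 1
    simp [ssgn] at this
    exact this
  -- P 1 c = 0 for all c
  have hP1 : ∀ c : A, P (1 : A) c = 0 := by
    intro c
    have hc : c ∈ 𝒜 0 ⊔ 𝒜 1 := by rw [hsup]; exact Submodule.mem_top
    rcases Submodule.mem_sup.mp hc with ⟨y, hy, z, hz, rfl⟩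
    have h1 : P (1 : A) y = 0 := by
      have := hskew 0 0 1 y hone hy
      rw [hP1right 0 y hy] at this
      simpa using this
    have h2 : P (1 : A) z = 0 := by
      have := hskew 0 1 1 z hone hz
      rw [hP1right 1 z hz] at this
      simpa using this
    simp [h1, h2]
  have hsq : ∀ c : A, P h (P h c) = 0 := by
    intro c
    have hj := hjacobi 1 1 h h hh hh c
    rw [hhh, hP1 c] at hj
    have hs : ssgn 1 1 = -1 := by norm_num [ssgn, ZMod.val_one]
    rw [hs] at hj
    have : (2 : ℂ) • P h (P h c) = 0 := by
      rw [two_smul]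
      linear_combination (norm := module) hj
    have h2 : (2 : ℂ) ≠ 0 := by norm_num
    exact (smul_eq_zero.mp this).resolve_left h2
  have hdecomp : ∀ f : A, f = P h (h * f) + h * P h f := by
    intro f
    have := hleib 1 1 h h hh hh f
    rw [hhh] at this
    have hs : ssgn 1 1 = -1 := by norm_num [ssgn, ZMod.val_one]
    rw [hs] at this
    simp only [one_mul] at this
    linear_combination (norm := module) -this
  constructor
  · intro f
    exact ⟨hsq (h * f), hsq f, hdecomp f⟩
  · intro f
    exact ⟨P h (h * f), P h f, hsq (h * f), hsq f, hdecomp f⟩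
end

section
/- Let Â = C[[x_1, …, x_N]] be a formal power series algebra with a continuous Poisson bracket, and suppose f, g ∈ Â·M are elements of the maximal ideal generated by the x_i with {f, g} = 1 + t for some t in the maximal ideal M. Then there exists g' ∈ Â·M² such that {f, g + g'} = 1. -/
/-!
Dividing `D = {f, ·}` by the unit `1 + t` gives a continuous derivation `D'` with `D' g = 1`.
For such a derivation the series `h = ∑ᵢ (-1)ⁱ/(i+1)! gⁱ⁺¹ D'ⁱ s` converges `M`-adically, its
`i`-th term lying in `Mⁱ⁺¹`, and telescopes: `D'` maps the `i`-th term to `eᵢ - eᵢ₊₁`, where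
`eᵢ = (-1)ⁱ/i! gⁱ D'ⁱ s`, so `D' h = e₀ = s`. Taking `s = -t/(1+t)` gives `D h = -t`, and
`h ≡ g s ≡ 0` modulo `M²`.
-/

open Finset Nat

lemma Ideal.smodEq_pow_smul_top_iff {R : Type*} [CommRing R] {I : Ideal R} {n : ℕ} {x y : R} :
    x ≡ y [SMOD (I ^ n • ⊤ : Submodule R R)] ↔ x - y ∈ I ^ n := by
  rw [SModEq.sub_mem, smul_eq_mul, Ideal.mul_top]

namespace Derivation

variable {𝕜 A : Type*} [Field 𝕜] [CommRing A] [Algebra 𝕜 A] (D : Derivation 𝕜 A A) (g s : A)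

noncomputable def primitiveTerm (i : ℕ) : A :=
  ((-1) ^ i / (i + 1)! : 𝕜) • (g ^ (i + 1) * D^[i] s)

noncomputable def primitiveSum (n : ℕ) : A :=
  ∑ i ∈ range n, primitiveTerm D g s i

noncomputable def primitiveError (n : ℕ) : A :=
  ((-1) ^ n / n ! : 𝕜) • (g ^ n * D^[n] s)

variable {D g}

lemma apply_primitiveTerm [CharZero 𝕜] (hg : D g = 1) (i : ℕ) :
    D (primitiveTerm D g s i) = primitiveError D g s i - primitiveError D g s (i + 1) := by
  have hfact : ((i + 1)! : 𝕜) = (i + 1) * i ! := by push_cast [Nat.factorial_succ]; ring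
  have hi : (i ! : 𝕜) ≠ 0 := by exact_mod_cast i.factorial_ne_zero
  have hi1 : (i + 1 : 𝕜) ≠ 0 := by exact_mod_cast i.succ_ne_zero
  rw [primitiveTerm, primitiveError, primitiveError, map_smul, leibniz, leibniz_pow, hg,
    Function.iterate_succ_apply', hfact, pow_succ (-1 : 𝕜) i, add_tsub_cancel_right,
    ← Nat.cast_smul_eq_nsmul 𝕜]
  simp only [smul_eq_mul, mul_one, smul_add, smul_smul, mul_smul_comm]
  have hc : (-1) ^ i / ((i + 1) * i ! : 𝕜) * ((i + 1 : ℕ) : 𝕜) = (-1) ^ i / i ! := by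
    push_cast; field_simp
  rw [hc, mul_comm ((⇑D)^[i] s)]
  module

lemma apply_primitiveSum [CharZero 𝕜] (hg : D g = 1) (n : ℕ) :
    D (primitiveSum D g s n) = s - primitiveError D g s n := by
  induction n with
  | zero => simp [primitiveSum, primitiveError]
  | succ n ih =>
    rw [primitiveSum, sum_range_succ, map_add, ← primitiveSum, ih, apply_primitiveTerm s hg]
    abel

variable {I : Ideal A}

lemma primitiveError_mem (hgI : g ∈ I) (n : ℕ) : primitiveError D g s n ∈ I ^ n :=
  Submodule.smul_of_tower_mem _ _ (Ideal.mul_mem_right _ _ (Ideal.pow_mem_pow hgI n))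

lemma primitiveTerm_mem (hgI : g ∈ I) (i : ℕ) : primitiveTerm D g s i ∈ I ^ (i + 1) :=
  Submodule.smul_of_tower_mem _ _ (Ideal.mul_mem_right _ _ (Ideal.pow_mem_pow hgI (i + 1)))

lemma primitiveSum_sub_primitiveSum_mem (hgI : g ∈ I) {m n : ℕ} (hmn : m ≤ n) :
    primitiveSum D g s n - primitiveSum D g s m ∈ I ^ m := by
  rw [primitiveSum, primitiveSum, ← sum_Ico_eq_sub _ hmn]
  refine Ideal.sum_mem _ fun i hi => Ideal.pow_le_pow_right ?_ (primitiveTerm_mem s hgI i)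
  have := (mem_Ico.mp hi).1
  omega

theorem exists_apply_eq_of_apply_eq_one [CharZero 𝕜] [IsAdicComplete I A]
    (hD : ∀ n, ∃ k, ∀ a ∈ I ^ k, D a ∈ I ^ n) (hgI : g ∈ I) (hg : D g = 1) (s : A) :
    ∃ h, D h = s ∧ h - g * s ∈ I ^ 2 := by
  obtain ⟨L, hL⟩ := IsPrecomplete.prec (I := I) inferInstance (f := primitiveSum D g s)
    fun hmn =>
      (Ideal.smodEq_pow_smul_top_iff.mpr (primitiveSum_sub_primitiveSum_mem s hgI hmn)).symm
  have hL' (n : ℕ) : L - primitiveSum D g s n ∈ I ^ n := by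
    rw [← neg_sub]; exact neg_mem (Ideal.smodEq_pow_smul_top_iff.mp (hL n))
  refine ⟨L, ?_, ?_⟩
  · refine (IsHausdorff.eq_iff_smodEq (I := I)).mpr fun n => Ideal.smodEq_pow_smul_top_iff.mpr ?_
    obtain ⟨k, hk⟩ := hD n
    have hsplit : D L - s =
        D (L - primitiveSum D g s (max k n)) - primitiveError D g s (max k n) := by
      rw [map_sub, apply_primitiveSum s hg]; abel
    rw [hsplit]
    exact sub_mem (hk _ (Ideal.pow_le_pow_right (le_max_left k n) (hL' _)))
      (Ideal.pow_le_pow_right (le_max_right k n) (primitiveError_mem s hgI _))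
  · have hsum : primitiveSum D g s 2 = g * s + primitiveTerm D g s 1 := by
      simp [primitiveSum, sum_range_succ, primitiveTerm]
    have hsplit : L - g * s = (L - primitiveSum D g s 2) + primitiveTerm D g s 1 := by
      rw [hsum]; abel
    rw [hsplit]
    exact add_mem (hL' 2) (primitiveTerm_mem s hgI 1)

theorem exists_mem_sq_apply_add_eq_one [CharZero 𝕜] [IsAdicComplete I A]
    (hD : ∀ n, ∃ k, ∀ a ∈ I ^ k, D a ∈ I ^ n) (hgI : g ∈ I) {t : A} (htI : t ∈ I)
    (hg : D g = 1 + t) : ∃ h ∈ I ^ 2, D (g + h) = 1 := by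
  obtain ⟨u, hu⟩ := Ideal.isUnit_of_sub_one_mem_jacobson_bot (1 + t)
    (by simpa using IsAdicComplete.le_jacobson_bot I htI)
  have hD' (n : ℕ) : ∃ k, ∀ a ∈ I ^ k, ((u⁻¹ : Aˣ) • D) a ∈ I ^ n :=
    (hD n).imp fun k hk a ha => Ideal.mul_mem_left _ _ (hk a ha)
  obtain ⟨h, hh, hhI⟩ := exists_apply_eq_of_apply_eq_one hD' hgI
    (by rw [smul_apply, hg, ← hu, Units.smul_def, smul_eq_mul, Units.inv_mul]) (-(↑u⁻¹ * t))
  have hDh : D h = -t := by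
    rw [smul_apply, Units.smul_def, smul_eq_mul, ← mul_neg] at hh
    exact (Units.mul_right_inj u⁻¹).mp hh
  refine ⟨h, ?_, by rw [map_add, hg, hDh, add_neg_cancel_right]⟩
  have hgs : g * -(↑u⁻¹ * t) ∈ I ^ 2 := by
    rw [pow_two]; exact Ideal.mul_mem_mul hgI (neg_mem (Ideal.mul_mem_left _ _ htI))
  simpa using add_mem hhI hgs

end Derivation

theorem stmt9_general (N : ℕ)
    -- the Poisson bracket on Â = ℂ[[x₁,…,x_N]]
    (P : MvPowerSeries (Fin N) ℂ →ₗ[ℂ] MvPowerSeries (Fin N) ℂ →ₗ[ℂ] MvPowerSeries (Fin N) ℂ)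
    -- Leibniz rule
    (hleib : ∀ a b c, P a (b * c) = P a b * c + b * P a c)
    -- continuity with respect to the M-adic topology, where M is the maximal
    -- ideal generated by the variables
    (M : Ideal (MvPowerSeries (Fin N) ℂ))
    (hM : M = Ideal.span (Set.range (MvPowerSeries.X : Fin N → MvPowerSeries (Fin N) ℂ)))
    (hcont : ∀ n : ℕ, ∃ k : ℕ, ∀ a b, a ∈ M ^ k → P a b ∈ M ^ n ∧ P b a ∈ M ^ n)
    -- the elements f, g and the hypothesis {f,g} = 1 + t, t ∈ M
    (f g t : MvPowerSeries (Fin N) ℂ)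
    (hg : g ∈ M) (ht : t ∈ M)
    (hfg : P f g = 1 + t) :
    ∃ g' ∈ M ^ 2, P f (g + g') = 1 := by
  subst hM
  let D : Derivation ℂ _ _ := Derivation.mk' (P f) fun a b => by
    rw [hleib, smul_eq_mul, smul_eq_mul, mul_comm b, add_comm]
  exact D.exists_mem_sq_apply_add_eq_one (fun n => (hcont n).imp fun k hk a ha => (hk a f ha).2)
    hg ht hfg

theorem stmt9 (N : ℕ)
    -- the Poisson bracket on Â = ℂ[[x₁,…,x_N]]
    (P : MvPowerSeries (Fin N) ℂ →ₗ[ℂ] MvPowerSeries (Fin N) ℂ →ₗ[ℂ] MvPowerSeries (Fin N) ℂ)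
    -- Lie algebra axioms
    (hskew : ∀ a b, P a b = -P b a)
    (hjac : ∀ a b c, P a (P b c) = P (P a b) c + P b (P a c))
    -- Leibniz rule
    (hleib : ∀ a b c, P a (b * c) = P a b * c + b * P a c)
    -- continuity with respect to the M-adic topology, where M is the maximal
    -- ideal generated by the variables
    (M : Ideal (MvPowerSeries (Fin N) ℂ))
    (hM : M = Ideal.span (Set.range (MvPowerSeries.X : Fin N → MvPowerSeries (Fin N) ℂ)))
    (hcont : ∀ n : ℕ, ∃ k : ℕ, ∀ a b, a ∈ M ^ k → P a b ∈ M ^ n ∧ P b a ∈ M ^ n)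
    -- the elements f, g and the hypothesis {f,g} = 1 + t, t ∈ M
    (f g t : MvPowerSeries (Fin N) ℂ)
    (hf : f ∈ M) (hg : g ∈ M) (ht : t ∈ M)
    (hfg : P f g = 1 + t) :
    ∃ g' ∈ M ^ 2, P f (g + g') = 1 :=
  stmt9_general N P hleib M hM hcont f g t hg ht hfg
end

section
/- Let Â be a Poisson superalgebra with even bracket and h ∈ Â an odd element with {h,h} = 1. Then the multiplication map φ : C⟨1,h⟩ ⊗ ker(ad_h) → Â, a ⊗ b ↦ ab, is an isomorphism of vector superspaces, and ker(ad_h) is a Poisson subalgebra of Â. -/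
/-!
STATEMENT 12: Let `Â` be a Poisson superalgebra with even bracket and `h ∈ Â`
an odd element with `{h,h} = 1`.  Then the multiplication map
`φ : ℂ⟨1,h⟩ ⊗ ker(ad_h) → Â`, `a ⊗ b ↦ ab`, is an isomorphism of vector
superspaces (every element of `Â` is uniquely `b + h·c` with
`b, c ∈ ker(ad_h)`), and `ker(ad_h)` is a Poisson subalgebra of `Â`.
-/

/-!
For odd `h` the super Jacobi identity gives `2 {h,{h,c}} = {{h,h},c} = {1,c} = 0`, so `ad_h`
squares to zero, and the Leibniz rule gives `{h, h a} = {h,h} a - h {h,a} = a - h {h,a}`.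
Hence `a = {h, h a} + h {h,a}` with both `{h, h a}` and `{h,a}` in `ker ad_h`; conversely, if
`a = b + h c` with `b, c ∈ ker ad_h`, then `{h,a} = c`, which gives uniqueness.  That `ker ad_h`
is closed under product and bracket is the Leibniz rule and the Jacobi identity for `ad_h`.
-/

theorem ssgn_zero_right (p : ZMod 2) : ssgn p 0 = 1 := by simp [ssgn]

theorem ssgn_one_one : ssgn 1 1 = -1 := by norm_num [ssgn, ZMod.val_one]

theorem LinearMap.eq_of_eqOn_sup_eq_top {R M N : Type*} [Semiring R] [AddCommMonoid M]
    [Module R M] [AddCommMonoid N] [Module R N] {V W : Submodule R M} (hVW : V ⊔ W = ⊤)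
    {f g : M →ₗ[R] N} (hV : Set.EqOn f g V) (hW : Set.EqOn f g W) : f = g :=
  LinearMap.eqLocus_eq_top.1 <| top_le_iff.1 <|
    hVW ▸ sup_le (LinearMap.le_eqLocus.2 hV) (LinearMap.le_eqLocus.2 hW)

section PoissonSuperalgebra

variable {A : Type*} [Ring A] [Algebra ℂ A] {𝒜 : ZMod 2 → Submodule ℂ A}
  {P : A →ₗ[ℂ] A →ₗ[ℂ] A}

theorem bracket_one_right_of_mem (hone : (1 : A) ∈ 𝒜 0)
    (hleib : ∀ p q : ZMod 2, ∀ a b : A, a ∈ 𝒜 p → b ∈ 𝒜 q → ∀ c : A,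
      P a (b * c) = P a b * c + ssgn p q • (b * P a c))
    {p : ZMod 2} {a : A} (ha : a ∈ 𝒜 p) : P a 1 = 0 := by
  have h := hleib p 0 a 1 ha hone 1
  rw [ssgn_zero_right, one_smul, mul_one, mul_one, one_mul] at h
  exact left_eq_add.mp h

theorem bracket_one_left (hone : (1 : A) ∈ 𝒜 0) (hsup : 𝒜 0 ⊔ 𝒜 1 = ⊤)
    (hskew : ∀ p q : ZMod 2, ∀ a b : A, a ∈ 𝒜 p → b ∈ 𝒜 q →
      P a b = -(ssgn p q) • P b a)
    (hleib : ∀ p q : ZMod 2, ∀ a b : A, a ∈ 𝒜 p → b ∈ 𝒜 q → ∀ c : A,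
      P a (b * c) = P a b * c + ssgn p q • (b * P a c))
    (c : A) : P 1 c = 0 := by
  have hzero (q : ZMod 2) : Set.EqOn (P 1) (0 : A →ₗ[ℂ] A) (𝒜 q) := fun c hc => by
    rw [hskew 0 q 1 c hone hc, bracket_one_right_of_mem hone hleib hc, smul_zero]
    rfl
  exact LinearMap.congr_fun (LinearMap.eq_of_eqOn_sup_eq_top hsup (hzero 0) (hzero 1)) c

theorem bracket_bracket_add_self_of_mem_one
    (hjacobi : ∀ p q : ZMod 2, ∀ a b : A, a ∈ 𝒜 p → b ∈ 𝒜 q → ∀ c : A,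
      P a (P b c) = P (P a b) c + ssgn p q • P b (P a c))
    {h : A} (hh : h ∈ 𝒜 1) (c : A) : P h (P h c) + P h (P h c) = P (P h h) c := by
  have j := hjacobi 1 1 h h hh hh c
  rw [ssgn_one_one, neg_smul, one_smul] at j
  nth_rewrite 1 [j]
  abel

theorem bracket_mul_self_of_mem_one
    (hleib : ∀ p q : ZMod 2, ∀ a b : A, a ∈ 𝒜 p → b ∈ 𝒜 q → ∀ c : A,
      P a (b * c) = P a b * c + ssgn p q • (b * P a c))
    {h : A} (hh : h ∈ 𝒜 1) (a : A) : P h (h * a) = P h h * a - h * P h a := by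
  rw [hleib 1 1 h h hh hh a, ssgn_one_one, neg_smul, one_smul, sub_eq_add_neg]

theorem bracket_mul_of_bracket_eq_zero (hsup : 𝒜 0 ⊔ 𝒜 1 = ⊤)
    (hleib : ∀ p q : ZMod 2, ∀ a b : A, a ∈ 𝒜 p → b ∈ 𝒜 q → ∀ c : A,
      P a (b * c) = P a b * c + ssgn p q • (b * P a c))
    {p : ZMod 2} {h c : A} (hh : h ∈ 𝒜 p) (hc : P h c = 0) (b : A) :
    P h (b * c) = P h b * c := by
  have hmul (q : ZMod 2) :
      Set.EqOn (P h ∘ₗ LinearMap.mulRight ℂ c) (LinearMap.mulRight ℂ c ∘ₗ P h) (𝒜 q) :=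
    fun b hb => by
      simp only [LinearMap.comp_apply, LinearMap.mulRight_apply]
      rw [hleib p q h b hh hb c, hc, mul_zero, smul_zero, add_zero]
  exact LinearMap.congr_fun (LinearMap.eq_of_eqOn_sup_eq_top hsup (hmul 0) (hmul 1)) b

theorem bracket_bracket_of_bracket_eq_zero (hsup : 𝒜 0 ⊔ 𝒜 1 = ⊤)
    (hjacobi : ∀ p q : ZMod 2, ∀ a b : A, a ∈ 𝒜 p → b ∈ 𝒜 q → ∀ c : A,
      P a (P b c) = P (P a b) c + ssgn p q • P b (P a c))
    {p : ZMod 2} {h c : A} (hh : h ∈ 𝒜 p) (hc : P h c = 0) (b : A) :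
    P h (P b c) = P (P h b) c := by
  have hbr (q : ZMod 2) : Set.EqOn (P h ∘ₗ P.flip c) (P.flip c ∘ₗ P h) (𝒜 q) :=
    fun b hb => by
      simp only [LinearMap.comp_apply, LinearMap.flip_apply]
      rw [hjacobi p q h b hh hb c, hc, map_zero, smul_zero, add_zero]
  exact LinearMap.congr_fun (LinearMap.eq_of_eqOn_sup_eq_top hsup (hbr 0) (hbr 1)) b

end PoissonSuperalgebra

theorem stmt12_general
    {A : Type} [Ring A] [Algebra ℂ A]
    (𝒜 : ZMod 2 → Submodule ℂ A)
    (hone : (1 : A) ∈ 𝒜 0)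
    (hsup : 𝒜 0 ⊔ 𝒜 1 = ⊤)
    (P : A →ₗ[ℂ] A →ₗ[ℂ] A)
    (hskew : ∀ p q : ZMod 2, ∀ a b : A, a ∈ 𝒜 p → b ∈ 𝒜 q →
      P a b = -(ssgn p q) • P b a)
    (hjacobi : ∀ p q : ZMod 2, ∀ a b : A, a ∈ 𝒜 p → b ∈ 𝒜 q → ∀ c : A,
      P a (P b c) = P (P a b) c + ssgn p q • P b (P a c))
    (hleib : ∀ p q : ZMod 2, ∀ a b : A, a ∈ 𝒜 p → b ∈ 𝒜 q → ∀ c : A,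
      P a (b * c) = P a b * c + ssgn p q • (b * P a c))
    -- the odd element h with {h,h} = 1
    (h : A) (hh : h ∈ 𝒜 1) (hhh : P h h = 1) :
    -- the multiplication map ℂ⟨1,h⟩ ⊗ ker(ad_h) → Â is bijective …
    (∀ a : A, ∃! p : A × A,
      (P h p.1 = 0 ∧ P h p.2 = 0) ∧ a = p.1 + h * p.2) ∧
    -- … and ker(ad_h) is a Poisson subalgebra of Â
    ((1 : A) ∈ {b : A | P h b = 0} ∧
     ∀ b c : A, P h b = 0 → P h c = 0 → P h (b * c) = 0 ∧ P h (P b c) = 0) := by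
  have hsq (c : A) : P h (P h c) = 0 := by
    have h2 := bracket_bracket_add_self_of_mem_one hjacobi hh c
    rw [hhh, bracket_one_left hone hsup hskew hleib, ← two_smul ℂ, smul_eq_zero] at h2
    exact h2.resolve_left two_ne_zero
  have hhmul (a : A) : P h (h * a) = a - h * P h a := by
    rw [bracket_mul_self_of_mem_one hleib hh, hhh, one_mul]
  refine ⟨fun a => ⟨(P h (h * a), P h a), ⟨⟨hsq _, hsq a⟩, ?_⟩, ?_⟩,
    bracket_one_right_of_mem hone hleib hh, fun b c hb hc => ⟨?_, ?_⟩⟩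
  · rw [hhmul, sub_add_cancel]
  · rintro ⟨b, c⟩ ⟨⟨hb, hc⟩, rfl⟩
    have hc' : P h (b + h * c) = c := by rw [map_add, hb, hhmul, hc, mul_zero, sub_zero, zero_add]
    rw [hc', hhmul, hc', add_sub_cancel_right]
  · rw [bracket_mul_of_bracket_eq_zero hsup hleib hh hc, hb, zero_mul]
  · rw [bracket_bracket_of_bracket_eq_zero hsup hjacobi hh hc, hb, map_zero, LinearMap.zero_apply]

theorem stmt12
    {A : Type} [Ring A] [Algebra ℂ A]
    (𝒜 : ZMod 2 → Submodule ℂ A)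
    (hone : (1 : A) ∈ 𝒜 0)
    (hmul : ∀ p q : ZMod 2, ∀ a b : A, a ∈ 𝒜 p → b ∈ 𝒜 q → a * b ∈ 𝒜 (p + q))
    (hsup : 𝒜 0 ⊔ 𝒜 1 = ⊤)
    (hind : 𝒜 0 ⊓ 𝒜 1 = ⊥)
    (hscomm : ∀ p q : ZMod 2, ∀ a b : A, a ∈ 𝒜 p → b ∈ 𝒜 q →
      a * b = ssgn p q • (b * a))
    (P : A →ₗ[ℂ] A →ₗ[ℂ] A)
    (heven : ∀ p q : ZMod 2, ∀ a b : A, a ∈ 𝒜 p → b ∈ 𝒜 q → P a b ∈ 𝒜 (p + q))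
    (hskew : ∀ p q : ZMod 2, ∀ a b : A, a ∈ 𝒜 p → b ∈ 𝒜 q →
      P a b = -(ssgn p q) • P b a)
    (hjacobi : ∀ p q : ZMod 2, ∀ a b : A, a ∈ 𝒜 p → b ∈ 𝒜 q → ∀ c : A,
      P a (P b c) = P (P a b) c + ssgn p q • P b (P a c))
    (hleib : ∀ p q : ZMod 2, ∀ a b : A, a ∈ 𝒜 p → b ∈ 𝒜 q → ∀ c : A,
      P a (b * c) = P a b * c + ssgn p q • (b * P a c))
    -- the odd element h with {h,h} = 1
    (h : A) (hh : h ∈ 𝒜 1) (hhh : P h h = 1) :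
    -- the multiplication map ℂ⟨1,h⟩ ⊗ ker(ad_h) → Â is bijective …
    (∀ a : A, ∃! p : A × A,
      (P h p.1 = 0 ∧ P h p.2 = 0) ∧ a = p.1 + h * p.2) ∧
    -- … and ker(ad_h) is a Poisson subalgebra of Â
    ((1 : A) ∈ {b : A | P h b = 0} ∧
     ∀ b c : A, P h b = 0 → P h c = 0 → P h (b * c) = 0 ∧ P h (P b c) = 0) :=
  stmt12_general 𝒜 hone hsup P hskew hjacobi hleib h hh hhh
end
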